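/- Let d, K, s, s* be positive integers with s* < s ≤ d. Let M ∈ ℝ^{d×K} be a matrix with at most s* nonzero rows, and let A ∈ ℝ^{d×K} be arbitrary. Let HT(A, s) denote any matrix obtained from A by keeping s rows of A whose Euclidean norms are the s largest (ties broken arbitrarily) and setting all other rows to zero. Then ‖HT(A, s) − M‖_F^2 ≤ (1 + 2·sqrt(s*/(s − s*)))·‖A − M‖_F^2. -/

import Mathlib

noncomputable section

open scoped BigOperators

namespace HomoPursuit

open Matrix

/-- Squared Frobenius norm of a real matrix. -/
def frobSq {m n : Type*} [Fintype m] [Fintype n] (A : Matrix m n ℝ) : ℝ :=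
  ∑ i, ∑ j, (A i j) ^ 2

/-- Frobenius norm of a real matrix. -/
def frob {m n : Type*} [Fintype m] [Fintype n] (A : Matrix m n ℝ) : ℝ :=
  Real.sqrt (frobSq A)

/-- Frobenius inner product `⟨A, B⟩ = tr(Aᵀ B)`. -/
def mdot {m n : Type*} [Fintype m] [Fintype n] (A B : Matrix m n ℝ) : ℝ :=
  ∑ i, ∑ j, A i j * B i j

/-- The `j`-th largest singular value of a real matrix (1-indexed); `0` if out of range. -/
def sval {m n : Type*} [Fintype m] [Fintype n] [DecidableEq n] (A : Matrix m n ℝ) (j : ℕ) : ℝ :=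
  (((Finset.univ.val.map fun i =>
      Real.sqrt (((by simpa using Matrix.isHermitian_conjTranspose_mul_self A : (Aᵀ * A).IsHermitian)).eigenvalues i)).toList.insertionSort
      (· ≥ ·)).getD (j - 1) 0)

/-- Spectral (operator) norm: the largest singular value. -/
def spec {m n : Type*} [Fintype m] [Fintype n] [DecidableEq n] (A : Matrix m n ℝ) : ℝ :=
  sval A 1

/-- The positive-semidefinite square root `(Aᵀ A)^{1/2}` of a Gram matrix. -/
def gramSqrt {m k : Type*} [Fintype m] [Fintype k] [DecidableEq k] (A : Matrix m k ℝ) :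
    Matrix k k ℝ :=
  (Matrix.posSemidef_conjTranspose_mul_self A).1.eigenvectorUnitary.1 *
    Matrix.diagonal ((↑) ∘ (Real.sqrt ·) ∘ (Matrix.posSemidef_conjTranspose_mul_self A).1.eigenvalues) *
    (star (Matrix.posSemidef_conjTranspose_mul_self A).1.eigenvectorUnitary : Matrix k k ℝ)

/-- `(Aᵀ A)^{-1/2}`. -/
def invGramSqrt {m k : Type*} [Fintype m] [Fintype k] [DecidableEq k] (A : Matrix m k ℝ) :
    Matrix k k ℝ :=
  (gramSqrt A)⁻¹

/-- Square root of a diagonal matrix with given (nonnegative) diagonal entries. -/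
def diagSqrt {k : ℕ} (d : Fin k → ℝ) : Matrix (Fin k) (Fin k) ℝ :=
  Matrix.diagonal fun j => Real.sqrt (d j)

/-- Squared Euclidean norm of row `i` of `A`. -/
def rowNormSq {d K : Type*} [Fintype d] [Fintype K] (A : Matrix d K ℝ) (i : d) : ℝ :=
  ∑ j, (A i j) ^ 2

/-- `IsHT A s A'` : `A'` is obtained from `A` by keeping `s` rows of largest Euclidean norm
(ties broken arbitrarily) and zeroing the remaining rows. -/
def IsHT {d K : Type*} [Fintype d] [Fintype K] [DecidableEq d]
    (A : Matrix d K ℝ) (s : ℕ) (A' : Matrix d K ℝ) : Prop :=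
  ∃ S : Finset d, S.card = s ∧
    (∀ i ∈ S, ∀ j ∉ S, rowNormSq A j ≤ rowNormSq A i) ∧
    A' = Matrix.of fun i j => if i ∈ S then A i j else 0

/-! Let `S` be the kept rows, `T` the support of `M` and `L = 2 √(s*/(s - s*))`. Rows of `S`
contribute `‖Aᵢ - Mᵢ‖²` to both sides, so the only new error comes from the rows of `T \ S`,
where Young's inequality gives `‖Mᵢ‖² ≤ (1 + 1/L) ‖Aᵢ‖² + (1 + L) ‖Aᵢ - Mᵢ‖²`. Every such row is
no longer than any row of `S \ T`, and `|T \ S| ≤ s*` while `|S \ T| ≥ s - s*`; by the choice of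
`L` this bounds `(1 + 1/L) ∑_{T \ S} ‖Aᵢ‖²` by `L ∑_{S \ T} ‖Aᵢ‖²`, which is error already
present in `‖A - M‖²` because `M` vanishes on `S \ T`. -/

open Finset

lemma sub_sq_le_young (x y : ℝ) {L : ℝ} (hL : 0 < L) :
    (x - y) ^ 2 ≤ (1 + L⁻¹) * x ^ 2 + (1 + L) * y ^ 2 := by
  have gap : (1 + L⁻¹) * x ^ 2 + (1 + L) * y ^ 2 - (x - y) ^ 2 = L⁻¹ * (x + L * y) ^ 2 := by
    field_simp
    ring
  have : 0 ≤ L⁻¹ * (x + L * y) ^ 2 := by positivity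
  linarith

lemma card_mul_sum_le_card_mul_sum {ι : Type*} (p : ι → ℝ) {U V : Finset ι}
    (h : ∀ i ∈ U, ∀ j ∈ V, p i ≤ p j) :
    (#V : ℝ) * ∑ i ∈ U, p i ≤ #U * ∑ j ∈ V, p j := by
  calc (#V : ℝ) * ∑ i ∈ U, p i = ∑ i ∈ U, ∑ _j ∈ V, p i := by simp [mul_sum]
    _ ≤ ∑ _i ∈ U, ∑ j ∈ V, p j := sum_le_sum fun i hi => sum_le_sum fun j hj => h i hi j hj
    _ = #U * ∑ j ∈ V, p j := by simp

lemma add_one_mul_le_sq_mul {L t n a σ : ℝ} (ht : 0 ≤ t) (htn : t ≤ n) (htσ : t ≤ σ)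
    (han : a ≤ n) (hL : L ^ 2 * a = 4 * σ) :
    (L + 1) * t ≤ L ^ 2 * n := by
  -- `L ^ 2 * n` dominates both `4 * t` and `L ^ 2 * t`, and `2 * (L + 1) ≤ 4 + L ^ 2`.
  nlinarith [mul_le_mul_of_nonneg_left han (sq_nonneg L),
    mul_le_mul_of_nonneg_left htn (sq_nonneg L), mul_nonneg (sq_nonneg (L - 1)) ht]

lemma one_add_inv_mul_sum_sdiff_le {ι : Type*} [DecidableEq ι] {p : ι → ℝ} (hp : ∀ i, 0 ≤ p i)
    {S T : Finset ι} {σ L : ℝ} (hT : (#T : ℝ) ≤ σ) (hσS : σ < #S) (hL : 0 < L)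
    (hLsq : L ^ 2 * (#S - σ) = 4 * σ) (hS : ∀ i ∈ S, ∀ j ∉ S, p j ≤ p i) :
    (1 + L⁻¹) * ∑ i ∈ T \ S, p i ≤ L * ∑ i ∈ S \ T, p i := by
  have hcard_S : (#(S \ T) : ℝ) + #(S ∩ T) = #S := by
    exact_mod_cast card_sdiff_add_card_inter S T
  have hcard_T : (#(T \ S) : ℝ) + #(S ∩ T) = #T := by
    rw [inter_comm]; exact_mod_cast card_sdiff_add_card_inter T S
  have havg : (#(S \ T) : ℝ) * ∑ i ∈ T \ S, p i ≤ #(T \ S) * ∑ i ∈ S \ T, p i :=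
    card_mul_sum_le_card_mul_sum p fun i hi j hj => hS j (mem_sdiff.1 hj).1 i (mem_sdiff.1 hi).2
  have hnum : (L + 1) * #(T \ S) ≤ L ^ 2 * #(S \ T) :=
    add_one_mul_le_sq_mul (Nat.cast_nonneg _) (by linarith) (by linarith) (by linarith) hLsq
  have hn : (0 : ℝ) < #(S \ T) := by linarith
  have hx : 0 ≤ ∑ i ∈ S \ T, p i := sum_nonneg fun i _ => hp i
  have hP : (L + 1) * ∑ i ∈ T \ S, p i ≤ L ^ 2 * ∑ i ∈ S \ T, p i := by
    refine le_of_mul_le_mul_left ?_ hn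
    nlinarith [mul_le_mul_of_nonneg_right hnum hx]
  rw [← mul_le_mul_iff_right₀ hL, ← mul_assoc, mul_add, mul_one, mul_inv_cancel₀ hL.ne']
  linarith

section

variable {ι κ : Type*} [Fintype ι] [Fintype κ]

lemma rowNormSq_le_young (A M : Matrix ι κ ℝ) (i : ι) {L : ℝ} (hL : 0 < L) :
    rowNormSq M i ≤ (1 + L⁻¹) * rowNormSq A i + (1 + L) * rowNormSq (A - M) i := by
  simp only [rowNormSq, mul_sum, ← sum_add_distrib]
  refine sum_le_sum fun j _ => ?_
  simpa using sub_sq_le_young (A i j) (A i j - M i j) hL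

variable [DecidableEq ι]

def keepRows (S : Finset ι) (A : Matrix ι κ ℝ) : Matrix ι κ ℝ :=
  Matrix.of fun i j => if i ∈ S then A i j else 0

lemma frobSq_keepRows_sub (S : Finset ι) (A M : Matrix ι κ ℝ) :
    frobSq (keepRows S A - M) = ∑ i ∈ S, rowNormSq (A - M) i + ∑ i ∈ Sᶜ, rowNormSq M i := by
  show ∑ i, rowNormSq _ i = _
  rw [← sum_add_sum_compl S (rowNormSq (keepRows S A - M))]
  congr 1 <;> refine sum_congr rfl fun i hi => ?_ <;> simp_all [rowNormSq, keepRows]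

lemma frobSq_keepRows_sub_le {S T : Finset ι} {A M : Matrix ι κ ℝ} (hM : ∀ i ∉ T, M i = 0)
    {L : ℝ} (hL : 0 < L)
    (hsel : (1 + L⁻¹) * ∑ i ∈ T \ S, rowNormSq A i ≤ L * ∑ i ∈ S \ T, rowNormSq A i) :
    frobSq (keepRows S A - M) ≤ (1 + L) * frobSq (A - M) := by
  set r := rowNormSq (A - M)
  have hr : ∀ i, 0 ≤ r i := fun i => sum_nonneg fun j _ => sq_nonneg _
  have hM_row : ∀ i ∉ T, rowNormSq M i = 0 := fun i hi => by simp [rowNormSq, hM i hi]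
  have hr_row : ∀ i ∉ T, r i = rowNormSq A i := fun i hi => by simp [r, rowNormSq, hM i hi]
  have hcompl : ∑ i ∈ Sᶜ, rowNormSq M i = ∑ i ∈ T \ S, rowNormSq M i := by
    refine (sum_subset (fun i hi => mem_compl.2 (mem_sdiff.1 hi).2) fun i hiS hiTS => ?_).symm
    exact hM_row i fun hiT => hiTS (mem_sdiff.2 ⟨hiT, mem_compl.1 hiS⟩)
  have hsel_r : (1 + L⁻¹) * ∑ i ∈ T \ S, rowNormSq A i ≤ L * ∑ i ∈ S \ T, r i := by
    rwa [sum_congr rfl fun i hi => hr_row i (mem_sdiff.1 hi).2]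
  have hyoung : ∑ i ∈ T \ S, rowNormSq M i ≤
      (1 + L⁻¹) * ∑ i ∈ T \ S, rowNormSq A i + (1 + L) * ∑ i ∈ T \ S, r i := by
    rw [mul_sum, mul_sum, ← sum_add_distrib]
    exact sum_le_sum fun i _ => rowNormSq_le_young A M i hL
  have hsub : ∑ i ∈ S \ T, r i ≤ ∑ i ∈ S, r i :=
    sum_le_sum_of_subset_of_nonneg sdiff_subset fun i _ _ => hr i
  have htotal : ∑ i ∈ S, r i + ∑ i ∈ T \ S, r i ≤ frobSq (A - M) := by
    rw [← sum_union disjoint_sdiff]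
    exact sum_le_sum_of_subset_of_nonneg (subset_univ _) fun i _ _ => hr i
  rw [frobSq_keepRows_sub, hcompl]
  calc ∑ i ∈ S, r i + ∑ i ∈ T \ S, rowNormSq M i
      ≤ ∑ i ∈ S, r i + L * ∑ i ∈ S \ T, r i + (1 + L) * ∑ i ∈ T \ S, r i := by linarith
    _ ≤ (1 + L) * (∑ i ∈ S, r i + ∑ i ∈ T \ S, r i) := by
      nlinarith [mul_le_mul_of_nonneg_left hsub hL.le]
    _ ≤ (1 + L) * frobSq (A - M) := by gcongr

end

theorem hard_thresholding_bound_general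
    (d K s sstar : ℕ) (hsstar : 0 < sstar)
    (h1 : sstar < s)
    (M A A' : Matrix (Fin d) (Fin K) ℝ)
    (hM : Set.ncard {i | M i ≠ 0} ≤ sstar)
    (hHT : IsHT A s A') :
    frobSq (A' - M) ≤
      (1 + 2 * Real.sqrt ((sstar : ℝ) / ((s : ℝ) - sstar))) * frobSq (A - M) := by
  classical
  obtain ⟨S, rfl, hS, rfl⟩ := hHT
  have hgap : (0 : ℝ) < #S - sstar := sub_pos.2 (by exact_mod_cast h1)
  set L := 2 * √((sstar : ℝ) / (#S - sstar))
  have hL : 0 < L := mul_pos two_pos (Real.sqrt_pos.2 (div_pos (by exact_mod_cast hsstar) hgap))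
  have hLsq : L ^ 2 * (#S - sstar) = 4 * sstar := by
    rw [mul_pow, Real.sq_sqrt (div_nonneg (Nat.cast_nonneg _) hgap.le)]
    field_simp
    ring
  set T := univ.filter fun i => M i ≠ 0
  have hT : (#T : ℝ) ≤ sstar := by
    rw [← Set.ncard_coe_finset, coe_filter_univ]
    exact_mod_cast hM
  have hMT : ∀ i ∉ T, M i = 0 := by simp [T]
  exact frobSq_keepRows_sub_le hMT hL <| one_add_inv_mul_sum_sdiff_le
    (fun i => sum_nonneg fun j _ => sq_nonneg (A i j)) hT (by exact_mod_cast h1) hL hLsq hS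

/-- **Lemma (hard-thresholding error bound).** -/
theorem hard_thresholding_bound
    (d K s sstar : ℕ) (hd : 0 < d) (hK : 0 < K) (hsstar : 0 < sstar)
    (h1 : sstar < s) (h2 : s ≤ d)
    (M A A' : Matrix (Fin d) (Fin K) ℝ)
    (hM : Set.ncard {i | M i ≠ 0} ≤ sstar)
    (hHT : IsHT A s A') :
    frobSq (A' - M) ≤
      (1 + 2 * Real.sqrt ((sstar : ℝ) / ((s : ℝ) - sstar))) * frobSq (A - M) :=
  hard_thresholding_bound_general d K s sstar hsstar h1 M A A' hM hHT

end HomoPursuit
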